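/- For every integer θ ≥ 0 (with the convention c_{−1} = 0), setting u = t⁻¹ s and v = q^θ u, Lassalle and Schlosser's one-variable coefficient C^{(q,t)}_θ(u) = t^θ · ((q t⁻¹;q)_θ/(q;q)_θ) · ((q u;q)_θ/(q t u;q)_θ) · (1 − ((1 − t v)/(1 − v)) · ((u − v)/(t u − v))) equals c_θ − c_{θ−1}. (This proves the agreement of the conjectured raising-operator coefficients with Lassalle–Schlosser's formula for n = 2.) -/

import Mathlib

/-!
Since `q t u = q s`, the coefficient `C_θ(u)` factors as `c_θ · (1 - ρ_θ)` with
`ρ_θ = (1 - t v)(u - v) / ((1 - v)(t u - v))`. The ratio `c_θ / c_{θ-1}` is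
`(t - q^θ)(1 - q^θ u) / ((1 - q^θ)(1 - q^θ s))`, and substituting `q^θ = v / u`, `q^θ s = t v`
shows it is exactly `ρ_θ⁻¹`; hence `c_θ ρ_θ = c_{θ-1}`. For `θ = 0` we have `v = u`, so `ρ_0 = 0`
matches `c_{-1} = 0`.
-/

open Finset

section

variable {F : Type*} [Field F]

/-- The `q`-shifted factorial `(a;q)_n`. -/
def qPochhammer (a q : F) (n : ℕ) : F := ∏ i ∈ range n, (1 - a * q ^ i)

theorem qPochhammer_succ (a q : F) (n : ℕ) :
    qPochhammer a q (n + 1) = qPochhammer a q n * (1 - a * q ^ n) :=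
  prod_range_succ _ _

/-- The coefficient `c_n`. -/
def raisingCoeff (q t s : F) (n : ℕ) : F :=
  t ^ n * (qPochhammer (q * t⁻¹) q n * qPochhammer (q * t⁻¹ * s) q n) /
    (qPochhammer q q n * qPochhammer (q * s) q n)

/-- `raisingCoeff q t s (n + 1) / raisingCoeff q t s n`, evaluated at `x = q ^ (n + 1)`. -/
def raisingRatio (t s x : F) : F :=
  t * (1 - x * t⁻¹) * (1 - x * t⁻¹ * s) / ((1 - x) * (1 - x * s))

theorem raisingCoeff_succ (q t s : F) (n : ℕ) :
    raisingCoeff q t s (n + 1) = raisingCoeff q t s n * raisingRatio t s (q ^ (n + 1)) := by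
  simp only [raisingCoeff, raisingRatio, qPochhammer_succ, div_eq_mul_inv, mul_inv]
  ring

theorem raisingCoeff_eq_prefactor {q t : F} (ht : t ≠ 0) (s : F) (n : ℕ) :
    raisingCoeff q t s n = t ^ n * (qPochhammer (q * t⁻¹) q n / qPochhammer q q n) *
      (qPochhammer (q * (t⁻¹ * s)) q n / qPochhammer (q * t * (t⁻¹ * s)) q n) := by
  rw [mul_assoc q t, mul_inv_cancel_left₀ ht, ← mul_assoc q, raisingCoeff,
    mul_assoc (t ^ n), div_mul_div_comm, mul_div_assoc]

theorem raisingRatio_mul_eq_one {t s x : F} (ht : t ≠ 0) (hs : s ≠ 0) (hx : 1 - x ≠ 0)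
    (hxs : 1 - x * s ≠ 0) (hxts : 1 - x * t⁻¹ * s ≠ 0) (htx : t - x ≠ 0) :
    raisingRatio t s x *
      ((1 - t * (x * (t⁻¹ * s))) / (1 - x * (t⁻¹ * s)) *
        ((t⁻¹ * s - x * (t⁻¹ * s)) / (t * (t⁻¹ * s) - x * (t⁻¹ * s)))) = 1 := by
  have htv : t * (x * (t⁻¹ * s)) = x * s := by field_simp
  have hnum : t⁻¹ * s - x * (t⁻¹ * s) = (1 - x) * (t⁻¹ * s) := by ring
  have hden : t * (t⁻¹ * s) - x * (t⁻¹ * s) = (t - x) * (t⁻¹ * s) := by ring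
  rw [htv, hnum, hden, mul_div_mul_right _ _ (mul_ne_zero (inv_ne_zero ht) hs), ← mul_assoc x,
    raisingRatio, show t * (1 - x * t⁻¹) = t - x by field_simp, div_mul_div_comm,
    div_mul_div_comm, div_eq_one_iff_eq (mul_ne_zero (mul_ne_zero hx hxs) (mul_ne_zero hxts htx))]
  ring

end

theorem stmt_3_general {F : Type*} [Field F] (q t s : F) (ht : t ≠ 0) (hs : s ≠ 0)
    (h1 : ∀ m : ℕ, 1 ≤ m → 1 - q ^ m ≠ 0)
    (h2 : ∀ m : ℕ, 1 ≤ m → 1 - q ^ m * s ≠ 0)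
    (h5 : ∀ θ : ℕ, 1 - q ^ θ * t⁻¹ * s ≠ 0)
    (h6 : ∀ θ : ℕ, t - q ^ θ ≠ 0)
    (c : ℤ → F)
    (hneg : ∀ θ : ℤ, θ < 0 → c θ = 0)
    (hc : ∀ θ : ℕ, c θ = t ^ θ *
      ((∏ i ∈ Finset.range θ, (1 - q * t⁻¹ * q ^ i)) *
       (∏ i ∈ Finset.range θ, (1 - q * t⁻¹ * s * q ^ i))) /
      ((∏ i ∈ Finset.range θ, (1 - q * q ^ i)) *
       (∏ i ∈ Finset.range θ, (1 - q * s * q ^ i))))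
    (θ : ℕ) (u v : F) (hu : u = t⁻¹ * s) (hv : v = q ^ θ * u) :
    t ^ θ * ((∏ i ∈ Finset.range θ, (1 - q * t⁻¹ * q ^ i)) /
             (∏ i ∈ Finset.range θ, (1 - q * q ^ i))) *
      ((∏ i ∈ Finset.range θ, (1 - q * u * q ^ i)) /
       (∏ i ∈ Finset.range θ, (1 - q * t * u * q ^ i))) *
      (1 - (1 - t * v) / (1 - v) * ((u - v) / (t * u - v)))
    = c θ - c ((θ : ℤ) - 1) := by
  subst hu hv
  have hc_eq : ∀ n : ℕ, c n = raisingCoeff q t s n := hc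
  rw [show t ^ θ * _ * _ = raisingCoeff q t s θ by rw [raisingCoeff_eq_prefactor ht]; rfl, ← hc_eq]
  cases θ with
  | zero => simp [hneg (-1) (by norm_num)]
  | succ n =>
    have hprev : c ((n + 1 : ℕ) - 1 : ℤ) = c n := by congr 1; push_cast; ring
    rw [hprev, hc_eq, hc_eq, raisingCoeff_succ, mul_one_sub, mul_assoc (raisingCoeff q t s n),
      raisingRatio_mul_eq_one ht hs (h1 _ n.succ_pos) (h2 _ n.succ_pos) (h5 _) (h6 _), mul_one]

/-- Lassalle and Schlosser's one-variable coefficient `C^{(q,t)}_θ(u)` with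
`u = t⁻¹ s`, `v = q^θ u` equals `c θ - c (θ-1)` (with `c (-1) = 0`); this is the agreement
with the conjectured raising-operator coefficients for `n = 2`. -/
theorem stmt_3 {F : Type*} [Field F] (q t s : F) (hq : q ≠ 0) (ht : t ≠ 0) (hs : s ≠ 0)
    (h1 : ∀ m : ℕ, 1 ≤ m → 1 - q ^ m ≠ 0)
    (h2 : ∀ m : ℕ, 1 ≤ m → 1 - q ^ m * s ≠ 0)
    (h3 : ∀ m : ℕ, 1 ≤ m → 1 - q ^ m * t⁻¹ ≠ 0)
    (h4 : ∀ m : ℕ, 1 ≤ m → 1 - q ^ m * t⁻¹ * s ≠ 0)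
    (h5 : ∀ θ : ℕ, 1 - q ^ θ * t⁻¹ * s ≠ 0)
    (h6 : ∀ θ : ℕ, t - q ^ θ ≠ 0)
    (c : ℤ → F)
    (hneg : ∀ θ : ℤ, θ < 0 → c θ = 0)
    (hc : ∀ θ : ℕ, c θ = t ^ θ *
      ((∏ i ∈ Finset.range θ, (1 - q * t⁻¹ * q ^ i)) *
       (∏ i ∈ Finset.range θ, (1 - q * t⁻¹ * s * q ^ i))) /
      ((∏ i ∈ Finset.range θ, (1 - q * q ^ i)) *
       (∏ i ∈ Finset.range θ, (1 - q * s * q ^ i))))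
    (θ : ℕ) (u v : F) (hu : u = t⁻¹ * s) (hv : v = q ^ θ * u) :
    t ^ θ * ((∏ i ∈ Finset.range θ, (1 - q * t⁻¹ * q ^ i)) /
             (∏ i ∈ Finset.range θ, (1 - q * q ^ i))) *
      ((∏ i ∈ Finset.range θ, (1 - q * u * q ^ i)) /
       (∏ i ∈ Finset.range θ, (1 - q * t * u * q ^ i))) *
      (1 - (1 - t * v) / (1 - v) * ((u - v) / (t * u - v)))
    = c θ - c ((θ : ℤ) - 1) :=
  stmt_3_general q t s ht hs h1 h2 h5 h6 c hneg hc θ u v hu hv
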